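/- arXiv:2206.02966 — 2 statements merged into one kernel-verified Lean document; each statement's English description precedes it below -/
import Mathlib

section
/- For 0 < α < 1 and c > 0, the integral (1/Γ(1-α)) ∫_0^∞ exp(-c²/s - s) s^{-α} ds equals 2 Γ(1-α)^{-1} c^{1-α} K_{1-α}(2c), where K_ν(z) = (1/2) Γ(ν) Γ(1-ν) (I_{-ν}(z) - I_ν(z)). -/
open Real MeasureTheory

/-- The modified Bessel function of the first kind. -/
noncomputable def besselI (ν z : ℝ) : ℝ :=
  (z / 2) ^ ν * ∑' n : ℕ, (z / 2) ^ (2 * n) / (n.factorial * Real.Gamma (n + ν + 1))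

/-- The modified Bessel function of the second kind for 0 < ν < 1. -/
noncomputable def besselK (ν z : ℝ) : ℝ :=
  1 / 2 * Real.Gamma ν * Real.Gamma (1 - ν) * (besselI (-ν) z - besselI ν z)

/-!
Write `I_ν(x) = ∫₀^∞ exp(-x/s - s) s^(ν-1) ds` (`besselKIntegral`) and
`W_ν(x) = Γ(ν) Γ(1-ν) (S_{1-ν}(x) - x^ν S_{1+ν}(x))` (`besselKSeries`), where
`S_γ(x) = ∑ xⁿ / (n! Γ(n+γ))` (`besselSeries`), so that `W_ν(c²) = 2 c^ν K_ν(2c)`.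
For `0 < ν < 1` both satisfy the first-order system `f_ν' = -x^(ν-1) f_{1-ν}` on `(0, ∞)`
(for `I_ν`: differentiate under the integral sign, then substitute `s ↦ x/s`; for `W_ν`: the
recurrence `γ S_{γ+1} + x S_{γ+2} = S_γ`), and both tend to `Γ(ν)` as `x → 0⁺`. For the differences
`D_ν = I_ν - W_ν` the energy `(D_ν² + D_{1-ν}²) exp(-x^ν/ν - x^(1-ν)/(1-ν))` is nonnegative,
nonincreasing and tends to `0` at `0⁺`, so it vanishes. The theorem is the case `ν = 1 - α`,
`x = c²`.
-/

open Set Filter Topology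
open scoped Nat

theorem exp_neg_div_le {x s : ℝ} (hx : 0 < x) (hs : 0 < s) (k : ℕ) :
    exp (-(x / s)) ≤ k ! * (s / x) ^ k := by
  have h := Real.pow_div_factorial_le_exp (x := x / s) (by positivity) k
  rw [exp_neg, inv_le_comm₀ (exp_pos _) (by positivity)]
  calc (k ! * (s / x) ^ k)⁻¹ = (x / s) ^ k / k ! := by rw [mul_inv, ← inv_pow, inv_div]; ring
    _ ≤ exp (x / s) := h

theorem integral_comp_div_Ioi {E : Type*} [NormedAddCommGroup E] [NormedSpace ℝ E] (g : ℝ → E)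
    {x : ℝ} (hx : 0 < x) : ∫ s in Ioi 0, (x / s ^ 2) • g (x / s) = ∫ s in Ioi 0, g s := by
  have himage : (x / ·) '' Ioi 0 = Ioi 0 := by
    refine (image_subset_iff.2 fun s (hs : 0 < s) ↦ div_pos hx hs).antisymm fun s (hs : 0 < s) ↦
      ⟨x / s, div_pos hx hs, div_div_cancel₀ hx.ne'⟩
  have hderiv (s : ℝ) (hs : s ∈ Ioi 0) :
      HasDerivWithinAt (x / ·) (-(x / s ^ 2)) (Ioi 0) s := by
    simpa [div_eq_mul_inv] using ((hasDerivAt_inv (ne_of_gt hs)).const_mul x).hasDerivWithinAt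
  have hinj : InjOn (x / ·) (Ioi 0) := fun s _ t _ hst ↦ by
    simpa [div_div_cancel₀ hx.ne'] using congrArg (x / ·) hst
  have h := integral_image_eq_integral_abs_deriv_smul measurableSet_Ioi hderiv hinj g
  rw [himage] at h
  rw [h]
  refine setIntegral_congr_fun measurableSet_Ioi fun s (hs : 0 < s) ↦ ?_
  rw [abs_neg, abs_of_pos (by positivity)]

theorem eq_zero_of_hasDerivAt_of_tendsto_zero {f g p q Ω : ℝ → ℝ} {a L x : ℝ}
    (hf : ∀ y ∈ Ioi a, HasDerivAt f (-(p y * g y)) y)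
    (hg : ∀ y ∈ Ioi a, HasDerivAt g (-(q y * f y)) y)
    (hΩ : ∀ y ∈ Ioi a, HasDerivAt Ω (p y + q y) y) (hpq : ∀ y ∈ Ioi a, 0 ≤ p y + q y)
    (hf₀ : Tendsto f (𝓝[>] a) (𝓝 0)) (hg₀ : Tendsto g (𝓝[>] a) (𝓝 0))
    (hΩ₀ : Tendsto Ω (𝓝[>] a) (𝓝 L)) (hx : a < x) :
    f x = 0 := by
  set E : ℝ → ℝ := fun y ↦ (f y ^ 2 + g y ^ 2) * exp (-Ω y)
  have hE : ∀ y ∈ Ioi a,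
      HasDerivAt E (-(exp (-Ω y) * ((p y + q y) * (f y + g y) ^ 2))) y := fun y hy ↦ by
    refine ((((hf y hy).pow 2).add ((hg y hy).pow 2)).mul (hΩ y hy).neg.exp).congr_deriv ?_
    simp only [Pi.neg_apply, Pi.add_apply, Pi.pow_apply]
    ring
  have hE_anti : AntitoneOn E (Ioi a) := by
    refine antitoneOn_of_hasDerivWithinAt_nonpos (convex_Ioi a)
      (f' := fun y ↦ -(exp (-Ω y) * ((p y + q y) * (f y + g y) ^ 2)))
      (fun y hy ↦ (hE y hy).continuousAt.continuousWithinAt) (fun y hy ↦ ?_) fun y hy ↦ ?_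
    all_goals rw [interior_Ioi] at hy
    · exact (hE y hy).hasDerivWithinAt
    · exact neg_nonpos.2 <| mul_nonneg (exp_pos _).le (mul_nonneg (hpq y hy) (sq_nonneg _))
  have hE₀ : Tendsto E (𝓝[>] a) (𝓝 0) := by
    simpa using ((hf₀.pow 2).add (hg₀.pow 2)).mul hΩ₀.neg.rexp
  have hEx : E x ≤ 0 := ge_of_tendsto hE₀ <| by
    filter_upwards [Ioo_mem_nhdsGT hx] with y hy
    exact hE_anti hy.1 hx hy.2.le
  have : f x ^ 2 + g x ^ 2 ≤ 0 := nonpos_of_mul_nonpos_left hEx (exp_pos _)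
  nlinarith [sq_nonneg (f x), sq_nonneg (g x)]

noncomputable def besselKIntegrand (b x s : ℝ) : ℝ := exp (-(x / s) - s) * s ^ (b - 1)

noncomputable def besselKIntegral (b x : ℝ) : ℝ := ∫ s in Ioi 0, besselKIntegrand b x s

theorem continuousOn_besselKIntegrand (b x : ℝ) : ContinuousOn (besselKIntegrand b x) (Ioi 0) :=
  (continuous_exp.comp_continuousOn
    ((continuousOn_const.div continuousOn_id fun _ hs ↦ ne_of_gt hs).neg.sub continuousOn_id)).mul
    (continuousOn_id.rpow_const fun _ hs ↦ Or.inl (ne_of_gt hs))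

theorem besselKIntegrand_nonneg (b x : ℝ) {s : ℝ} (hs : 0 < s) : 0 ≤ besselKIntegrand b x s := by
  unfold besselKIntegrand; positivity

theorem antitone_besselKIntegrand (b : ℝ) {s : ℝ} (hs : 0 < s) :
    Antitone (besselKIntegrand b · s) := fun x y hxy ↦ by
  dsimp only [besselKIntegrand]; gcongr

theorem integrableOn_besselKIntegrand (b : ℝ) {x : ℝ} (hx : 0 < x) :
    IntegrableOn (besselKIntegrand b x) (Ioi 0) := by
  obtain ⟨k, hk⟩ : ∃ k : ℕ, 0 < b + k := by
    obtain ⟨k, hk⟩ := exists_nat_gt (-b)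
    exact ⟨k, by linarith⟩
  refine Integrable.mono' ((GammaIntegral_convergent hk).const_mul (k ! / x ^ k))
    ((continuousOn_besselKIntegrand b x).aestronglyMeasurable measurableSet_Ioi) ?_
  refine (ae_restrict_iff' measurableSet_Ioi).2 <| .of_forall fun s (hs : 0 < s) ↦ ?_
  rw [Real.norm_of_nonneg (besselKIntegrand_nonneg b x hs)]
  calc besselKIntegrand b x s = exp (-(x / s)) * (exp (-s) * s ^ (b - 1)) := by
        rw [besselKIntegrand, sub_eq_add_neg, exp_add, mul_assoc]
    _ ≤ k ! * (s / x) ^ k * (exp (-s) * s ^ (b - 1)) := by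
        gcongr; exact exp_neg_div_le hx hs k
    _ = k ! / x ^ k * (exp (-s) * s ^ (b + k - 1)) := by
        rw [show b + k - 1 = (b - 1) + k by ring, rpow_add_natCast hs.ne', div_pow]; ring

theorem hasDerivAt_besselKIntegrand (b y : ℝ) {s : ℝ} (hs : 0 < s) :
    HasDerivAt (besselKIntegrand b · s) (-besselKIntegrand (b - 1) y s) y := by
  refine ((((hasDerivAt_id y).div_const s).neg.sub_const s).exp.mul_const _).congr_deriv ?_
  simp only [besselKIntegrand, Pi.neg_apply, id, rpow_sub_one hs.ne' (b - 1)]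
  ring

theorem hasDerivAt_besselKIntegral (b : ℝ) {x : ℝ} (hx : 0 < x) :
    HasDerivAt (besselKIntegral b) (-besselKIntegral (b - 1) x) x := by
  have hmeas (β y : ℝ) : AEStronglyMeasurable (besselKIntegrand β y) (volume.restrict (Ioi 0)) :=
    (continuousOn_besselKIntegrand β y).aestronglyMeasurable measurableSet_Ioi
  have key := hasDerivAt_integral_of_dominated_loc_of_deriv_le (μ := volume.restrict (Ioi 0))
    (F' := fun y s ↦ -besselKIntegrand (b - 1) y s) (x₀ := x)
    (Ioo_mem_nhds (half_lt_self hx) (lt_add_one x)) (.of_forall (hmeas b))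
    (integrableOn_besselKIntegrand b hx) (hmeas (b - 1) x).neg ?_
    (integrableOn_besselKIntegrand (b - 1) (half_pos hx)) ?_
  · rw [integral_neg] at key
    exact key.2
  all_goals refine (ae_restrict_iff' measurableSet_Ioi).2 <| .of_forall fun s (hs : 0 < s) y hy ↦ ?_
  · rw [norm_neg, Real.norm_of_nonneg (besselKIntegrand_nonneg _ _ hs)]
    exact antitone_besselKIntegrand _ hs hy.1.le
  · exact hasDerivAt_besselKIntegrand b y hs

theorem besselKIntegral_eq_rpow_mul (b : ℝ) {x : ℝ} (hx : 0 < x) :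
    besselKIntegral b x = x ^ b * besselKIntegral (-b) x := by
  rw [besselKIntegral, ← integral_comp_div_Ioi _ hx, besselKIntegral, ← integral_const_mul]
  refine setIntegral_congr_fun measurableSet_Ioi fun s (hs : 0 < s) ↦ ?_
  simp only [besselKIntegrand, smul_eq_mul, div_div_cancel₀ hx.ne']
  rw [div_rpow hx.le hs.le, rpow_sub_one hx.ne', rpow_sub_one hs.ne', rpow_sub_one hs.ne',
    rpow_neg hs.le]
  field_simp
  ring_nf

theorem tendsto_besselKIntegral_zero {b : ℝ} (hb : 0 < b) :
    Tendsto (besselKIntegral b) (𝓝[>] 0) (𝓝 (Gamma b)) := by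
  have h₀ : besselKIntegrand b 0 = fun s ↦ exp (-s) * s ^ (b - 1) := by
    ext s; simp [besselKIntegrand]
  rw [Gamma_eq_integral hb, ← h₀]
  refine tendsto_integral_filter_of_dominated_convergence (besselKIntegrand b 0)
    (.of_forall fun y ↦ (continuousOn_besselKIntegrand b y).aestronglyMeasurable measurableSet_Ioi)
    ?_ ?_ ?_
  · filter_upwards [self_mem_nhdsWithin] with y (hy : 0 < y)
    refine (ae_restrict_iff' measurableSet_Ioi).2 <| .of_forall fun s (hs : 0 < s) ↦ ?_
    rw [Real.norm_of_nonneg (besselKIntegrand_nonneg _ _ hs)]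
    exact antitone_besselKIntegrand b hs hy.le
  · exact h₀ ▸ GammaIntegral_convergent hb
  · refine (ae_restrict_iff' measurableSet_Ioi).2 <| .of_forall fun s (hs : 0 < s) ↦ ?_
    exact (hasDerivAt_besselKIntegrand b 0 hs).continuousAt.tendsto.mono_left nhdsWithin_le_nhds

noncomputable def besselSeries (γ x : ℝ) : ℝ := ∑' n : ℕ, x ^ n / (n ! * Gamma (n + γ))

theorem summable_besselSeries (γ x : ℝ) :
    Summable fun n : ℕ ↦ x ^ n / (n ! * Gamma (n + γ)) := by
  refine .of_norm_bounded_eventually_nat (Real.summable_pow_div_factorial |x|) ?_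
  filter_upwards [eventually_ge_atTop ⌈2 - γ⌉₊] with n hn
  have hΓ : 1 ≤ Gamma (n + γ) := by
    have h2 : (2 : ℝ) ≤ n + γ := by linarith [(Nat.ceil_le.1 hn : 2 - γ ≤ n)]
    simpa [Gamma_two] using Gamma_strictMonoOn_Ici.monotoneOn (mem_Ici.2 le_rfl) h2 h2
  rw [norm_div, norm_pow, norm_mul, Real.norm_natCast, Real.norm_of_nonneg (zero_le_one.trans hΓ),
    Real.norm_eq_abs]
  exact div_le_div_of_nonneg_left (by positivity) (by positivity)
    (le_mul_of_one_le_right (by positivity) hΓ)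

theorem succ_mul_div_factorial_succ (γ x : ℝ) (n : ℕ) :
    (n + 1 : ℕ) * x ^ n / ((n + 1)! * Gamma ((n + 1 : ℕ) + γ))
      = x ^ n / (n ! * Gamma (n + (γ + 1))) := by
  rw [Nat.factorial_succ]
  push_cast
  rw [← add_assoc, add_right_comm]
  field_simp

theorem hasDerivAt_besselSeries (γ x : ℝ) :
    HasDerivAt (besselSeries γ) (besselSeries (γ + 1) x) x := by
  set g' : ℕ → ℝ → ℝ := fun n y ↦ n * y ^ (n - 1) / (n ! * Gamma (n + γ))
  have hg'_succ (y : ℝ) (n : ℕ) : g' (n + 1) y = y ^ n / (n ! * Gamma (n + (γ + 1))) := by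
    simp only [g', ← succ_mul_div_factorial_succ, Nat.add_sub_cancel]
  have hg'_summable (y : ℝ) : Summable fun n ↦ |g' n y| := by
    rw [← summable_nat_add_iff 1]
    simpa only [hg'_succ] using (summable_besselSeries (γ + 1) y).abs
  set R := |x| + 1
  have hxR : x ∈ Ioo (-R) R := abs_lt.1 (lt_add_one _)
  have hg'_le (n : ℕ) (y : ℝ) (hy : y ∈ Ioo (-R) R) : ‖g' n y‖ ≤ |g' n R| := by
    simp only [g', Real.norm_eq_abs, abs_div, abs_mul, abs_pow]
    gcongr _ * ?_ ^ _ / _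
    exact (abs_lt.2 hy).le.trans (le_abs_self R)
  have key := hasDerivAt_tsum_of_isPreconnected (hg'_summable R) isOpen_Ioo
    (convex_Ioo _ _).isPreconnected (fun n y _ ↦ (hasDerivAt_pow n y).div_const _)
    hg'_le hxR (summable_besselSeries γ x) hxR
  rw [(hg'_summable x).of_abs.tsum_eq_zero_add, tsum_congr (hg'_succ x)] at key
  simp only [g', Nat.cast_zero, zero_mul, zero_div, zero_add] at key
  exact key

theorem besselSeries_zero (γ : ℝ) : besselSeries γ 0 = (Gamma γ)⁻¹ := by
  rw [besselSeries, tsum_eq_single 0 fun n hn ↦ by rw [zero_pow hn, zero_div]]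
  simp

theorem besselSeries_recurrence {γ : ℝ} (hγ : 0 < γ) (x : ℝ) :
    γ * besselSeries (γ + 1) x + x * besselSeries (γ + 2) x = besselSeries γ x := by
  set t : ℕ → ℝ := fun n ↦ n * x ^ n / (n ! * Gamma (n + (γ + 1)))
  have ht_succ (n : ℕ) : t (n + 1) = x * (x ^ n / (n ! * Gamma (n + (γ + 2)))) := by
    rw [show γ + 2 = γ + 1 + 1 by ring, ← succ_mul_div_factorial_succ]
    simp only [t, pow_succ]
    ring
  have ht_summable : Summable t := by
    rw [← summable_nat_add_iff 1]
    simpa only [ht_succ] using (summable_besselSeries (γ + 2) x).mul_left x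
  have ht_sum : ∑' n, t n = x * besselSeries (γ + 2) x := by
    rw [ht_summable.tsum_eq_zero_add, tsum_congr ht_succ, tsum_mul_left]
    simp [t, besselSeries]
  rw [← ht_sum, besselSeries, ← tsum_mul_left,
    ← ((summable_besselSeries _ x).mul_left γ).tsum_add ht_summable, besselSeries]
  refine tsum_congr fun n ↦ ?_
  have hn : (n : ℝ) + γ ≠ 0 := by positivity
  simp only [t]
  rw [← add_assoc, Gamma_add_one hn]
  field_simp
  ring

theorem besselI_two_mul (ν c : ℝ) : besselI ν (2 * c) = c ^ ν * besselSeries (ν + 1) (c ^ 2) := by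
  rw [besselI, besselSeries, mul_div_cancel_left₀ c two_ne_zero]
  congr 1
  refine tsum_congr fun n ↦ ?_
  rw [pow_mul, add_assoc]

noncomputable def besselKSeries (ν x : ℝ) : ℝ :=
  Gamma ν * Gamma (1 - ν) * (besselSeries (1 - ν) x - x ^ ν * besselSeries (1 + ν) x)

theorem besselKSeries_sq {c : ℝ} (hc : 0 < c) (ν : ℝ) :
    besselKSeries ν (c ^ 2) = 2 * c ^ ν * besselK ν (2 * c) := by
  have h₁ : c ^ ν * c ^ (-ν) = 1 := by rw [← rpow_add hc]; simp
  have h₂ : (c ^ 2) ^ ν = c ^ ν * c ^ ν := by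
    rw [← rpow_natCast, ← rpow_mul hc.le, ← rpow_add hc]; ring_nf
  rw [besselKSeries, besselK, besselI_two_mul, besselI_two_mul, h₂, neg_add_eq_sub, add_comm ν 1]
  linear_combination (-(Gamma ν * Gamma (1 - ν) * besselSeries (1 - ν) (c ^ 2))) * h₁

theorem hasDerivAt_besselKSeries {ν x : ℝ} (hν : 0 < ν) (hx : 0 < x) :
    HasDerivAt (besselKSeries ν) (-(x ^ (ν - 1) * besselKSeries (1 - ν) x)) x := by
  have h := ((hasDerivAt_besselSeries (1 - ν) x).sub ((hasDerivAt_rpow_const (p := ν)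
    (Or.inl hx.ne')).mul (hasDerivAt_besselSeries (1 + ν) x))).const_mul (Gamma ν * Gamma (1 - ν))
  refine h.congr_deriv ?_
  have h₁ : x ^ (ν - 1) * x ^ (1 - ν) = 1 := by rw [← rpow_add hx]; simp
  have h₂ : x ^ (ν - 1) * x = x ^ ν := by rw [rpow_sub_one hx.ne']; field_simp
  rw [besselKSeries, sub_sub_cancel, ← besselSeries_recurrence hν x, add_comm 1 ν,
    show 1 - ν + 1 = 1 + (1 - ν) by ring, show ν + 1 + 1 = ν + 2 by ring]
  linear_combination Gamma ν * Gamma (1 - ν) *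
    (besselSeries (ν + 2) x * h₂ - besselSeries (1 + (1 - ν)) x * h₁)

theorem tendsto_besselKSeries_zero {ν : ℝ} (hν₀ : 0 < ν) (hν₁ : ν < 1) :
    Tendsto (besselKSeries ν) (𝓝[>] 0) (𝓝 (Gamma ν)) := by
  have hcont : ContinuousAt (besselKSeries ν) 0 :=
    continuousAt_const.mul ((hasDerivAt_besselSeries _ 0).continuousAt.sub
      ((continuousAt_rpow_const 0 ν (Or.inr hν₀.le)).mul
        (hasDerivAt_besselSeries _ 0).continuousAt))
  have hzero : besselKSeries ν 0 = Gamma ν := by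
    simp [besselKSeries, besselSeries_zero, zero_rpow hν₀.ne',
      (Gamma_pos_of_pos (sub_pos.2 hν₁)).ne']
  exact hzero ▸ hcont.tendsto.mono_left nhdsWithin_le_nhds

theorem besselKIntegral_eq_besselKSeries {ν x : ℝ} (hν₀ : 0 < ν) (hν₁ : ν < 1) (hx : 0 < x) :
    besselKIntegral ν x = besselKSeries ν x := by
  set D : ℝ → ℝ → ℝ := fun μ y ↦ besselKIntegral μ y - besselKSeries μ y
  have hD {μ : ℝ} (hμ : 0 < μ) (y : ℝ) (hy : y ∈ Ioi 0) :
      HasDerivAt (D μ) (-(y ^ (μ - 1) * D (1 - μ) y)) y := by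
    have hI := hasDerivAt_besselKIntegral μ hy
    rw [besselKIntegral_eq_rpow_mul (μ - 1) hy, neg_sub] at hI
    exact (hI.sub (hasDerivAt_besselKSeries hμ hy)).congr_deriv (by ring)
  have hD₀ {μ : ℝ} (hμ₀ : 0 < μ) (hμ₁ : μ < 1) : Tendsto (D μ) (𝓝[>] 0) (𝓝 0) := by
    simpa using (tendsto_besselKIntegral_zero hμ₀).sub (tendsto_besselKSeries_zero hμ₀ hμ₁)
  have hν₁' : 0 < 1 - ν := sub_pos.2 hν₁
  have hΩ (y : ℝ) (hy : y ∈ Ioi 0) : HasDerivAt (fun y ↦ y ^ ν / ν + y ^ (1 - ν) / (1 - ν))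
      (y ^ (ν - 1) + y ^ (1 - ν - 1)) y := by
    refine (((hasDerivAt_rpow_const (Or.inl (ne_of_gt hy))).div_const ν).add
      ((hasDerivAt_rpow_const (Or.inl (ne_of_gt hy))).div_const (1 - ν))).congr_deriv ?_
    field_simp
  have hΩ₀ : Tendsto (fun y ↦ y ^ ν / ν + y ^ (1 - ν) / (1 - ν)) (𝓝[>] 0)
      (𝓝 (0 ^ ν / ν + 0 ^ (1 - ν) / (1 - ν))) :=
    (((continuousAt_rpow_const 0 ν (Or.inr hν₀.le)).div_const ν).add
      ((continuousAt_rpow_const 0 (1 - ν) (Or.inr hν₁'.le)).div_const (1 - ν))).tendsto.mono_left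
      nhdsWithin_le_nhds
  have hDν' := hD hν₁'
  rw [sub_sub_cancel] at hDν'
  exact sub_eq_zero.1 <| eq_zero_of_hasDerivAt_of_tendsto_zero (f := D ν) (hD hν₀) hDν' hΩ
    (fun y (hy : 0 < y) ↦ by positivity) (hD₀ hν₀ hν₁) (hD₀ hν₁' (by linarith)) hΩ₀ hx

/-- For 0 < α < 1 and c > 0,
`(1/Γ(1-α)) ∫_0^∞ exp(-c²/s - s) s^{-α} ds = 2 Γ(1-α)⁻¹ c^{1-α} K_{1-α}(2c)`. -/
theorem integral_exp_eq_besselK (α c : ℝ) (hα0 : 0 < α) (hα1 : α < 1) (hc : 0 < c) :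
    (Real.Gamma (1 - α))⁻¹ * ∫ s in Set.Ioi (0 : ℝ), Real.exp (-(c ^ 2 / s) - s) * s ^ (-α)
      = 2 * (Real.Gamma (1 - α))⁻¹ * c ^ (1 - α) * besselK (1 - α) (2 * c) := by
  have hintegral : ∫ s in Ioi (0 : ℝ), exp (-(c ^ 2 / s) - s) * s ^ (-α)
      = besselKIntegral (1 - α) (c ^ 2) := by
    simp only [besselKIntegral, besselKIntegrand, sub_sub_cancel_left]
  rw [hintegral, besselKIntegral_eq_besselKSeries (by linarith) (by linarith) (by positivity),
    besselKSeries_sq hc]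
  ring
end

section
/- Let β > 0, let U be Poisson distributed with parameter a > 0, and let R_1, R_2, ... be i.i.d. exponential random variables with parameter β, all independent. Then for λ > 0, the conditional distribution of U given R_1 + ... + R_U = λ (with the convention that an empty sum is 0, conditioning on the density at λ > 0) is the Bessel(-1, 2√(aβλ)) distribution supported on positive integers: P(U = n | sum = λ) ∝ (aβλ)^n / (n! (n-1)!) for n ≥ 1. -/
/-!
For `l > 0` the joint weight of `(U, R₁ + ⋯ + R_U)` at `(n, l)` factors as
`e^{-a-βl} / l · (aβl)ⁿ / (n! Γ(n))`, so conditioning on the sum cancels the constant and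
leaves the weights `yⁿ / (n! Γ(n))` with `y = aβl`. With `z = 2√y` these are, up to the common
factor `(z/2)⁻¹`, exactly the terms `(z/2)^{2n-1} / (n! Γ(n))` of the Bessel(-1, z)
distribution and of `I₋₁(z)`. No summability is needed: both sides are normalized by the
same series.
-/

open Real

/-- The Bessel(ν,z) probability mass function on ℕ (with `1/Γ(0) = 0`, so
`besselPMF (-1) z 0 = 0`). -/
noncomputable def besselPMF (ν z : ℝ) (n : ℕ) : ℝ :=
  (besselI ν z)⁻¹ * (z / 2) ^ ((2 * n : ℝ) + ν) / (n.factorial * Real.Gamma (n + ν + 1))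

open Nat

theorem div_tsum_const_mul {ι K : Type*} [Semifield K] [TopologicalSpace K]
    [IsTopologicalSemiring K] [T2Space K] {c : K} (hc : c ≠ 0) (f : ι → K) (i : ι) :
    c * f i / ∑' j, c * f j = f i / ∑' j, f j := by
  rw [tsum_mul_left, mul_div_mul_left _ _ hc]

theorem poisson_mul_gamma_density_eq (a β : ℝ) {l : ℝ} (hl : 0 < l) (n : ℕ) :
    exp (-a) * a ^ n / n ! * (β ^ n / Gamma n) * l ^ ((n : ℝ) - 1) * exp (-(β * l))
      = exp (-a) * exp (-(β * l)) / l * ((a * β * l) ^ n / (n ! * Gamma n)) := by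
  rw [rpow_sub hl, rpow_one, rpow_natCast]
  field_simp
  ring

theorem besselI_neg_one_two_mul_sqrt {y : ℝ} (hy : 0 ≤ y) :
    besselI (-1) (2 * √y) = (√y)⁻¹ * ∑' m : ℕ, y ^ m / (m ! * Gamma m) := by
  simp only [besselI, mul_div_cancel_left₀ _ (two_ne_zero' ℝ), rpow_neg_one, pow_mul,
    sq_sqrt hy, neg_add_cancel_right]

theorem besselPMF_neg_one_two_mul_sqrt {y : ℝ} (hy : 0 < y) (n : ℕ) :
    besselPMF (-1) (2 * √y) n =
      y ^ n / (n ! * Gamma n) / ∑' m : ℕ, y ^ m / (m ! * Gamma m) := by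
  have hs : 0 < √y := sqrt_pos.2 hy
  have hpow : √y ^ ((2 * n : ℝ) + -1) = y ^ n / √y := by
    rw [rpow_add hs, rpow_neg_one, ← Nat.cast_ofNat, ← Nat.cast_mul, rpow_natCast, pow_mul,
      sq_sqrt hy.le, div_eq_mul_inv]
  rw [besselPMF, besselI_neg_one_two_mul_sqrt hy.le, mul_div_cancel_left₀ _ (two_ne_zero' ℝ),
    neg_add_cancel_right, hpow]
  field_simp

/-- Let β > 0, U Poisson(a), R_1, R_2, ... i.i.d. Exponential(β), all independent.
The joint density of (U, R_1 + ... + R_U) at (n, l) for l > 0 is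
`e^{-a} a^n/n! · β^n/Γ(n) l^{n-1} e^{-βl}` (vanishing for n = 0 since `1/Γ(0) = 0`:
the empty sum puts no mass on l > 0).  Conditioning on the sum being l > 0 yields
the Bessel(-1, 2√(aβl)) distribution, supported on positive integers. -/
theorem conditional_poisson_given_exponential_sum (β a l : ℝ)
    (hβ : 0 < β) (ha : 0 < a) (hl : 0 < l) :
    ∀ n : ℕ,
      (Real.exp (-a) * a ^ n / n.factorial * (β ^ n / Real.Gamma n) *
          l ^ ((n : ℝ) - 1) * Real.exp (-(β * l))) /
        (∑' m : ℕ, Real.exp (-a) * a ^ m / m.factorial * (β ^ m / Real.Gamma m) *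
          l ^ ((m : ℝ) - 1) * Real.exp (-(β * l)))
      = besselPMF (-1) (2 * Real.sqrt (a * β * l)) n := by
  intro n
  simp only [poisson_mul_gamma_density_eq a β hl]
  rw [div_tsum_const_mul (by positivity) (fun m : ℕ ↦ (a * β * l) ^ m / (m ! * Gamma m)),
    besselPMF_neg_one_two_mul_sqrt (by positivity)]
end
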